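/- For every n ≥ 1 and every puncturing set X ⊆ {0,…,2^n−1} that is upward closed under binary domination (j ∈ X, j ⪯ k, and k < 2^n imply k ∈ X), the resulting incapable bit pattern is the bitwise complement of the puncturing pattern: U_p(X) = {(2^n − 1) − x : x ∈ X}. -/

import Mathlib

/-- Binary domination: every binary digit of `i` is at most the corresponding digit of `j`. -/
def bdom (i j : ℕ) : Prop := ∀ t, i.testBit t = true → j.testBit t = true

instance (i j : ℕ) : Decidable (bdom i j) :=
  decidable_of_iff (i ||| j = j) (by
    constructor
    · intro h t hi
      have h1 : (i ||| j).testBit t = j.testBit t := by rw [h]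
      rw [Nat.testBit_or, hi, Bool.true_or] at h1
      exact h1.symm
    · intro h
      apply Nat.eq_of_testBit_eq
      intro t
      rw [Nat.testBit_or]
      cases hi : i.testBit t with
      | true => simp [h t hi]
      | false => simp)

/-- One step of zero-LLR propagation, computing the stage-`t` zero-LLR set from the
stage-`t+1` zero-LLR set `S`, for a polar code of length `2^n`. -/
def zstep (n t : ℕ) (S : Finset ℕ) : Finset ℕ :=
  (Finset.range (2 ^ n)).filter fun i =>
    if i.testBit t then i ∈ S ∧ i - 2 ^ t ∈ S else i ∈ S ∨ i + 2 ^ t ∈ S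

/-- Zero-LLR set at stage `t` for puncturing set `X`, for a polar code of length `2^n`:
`Zstage n X n = X` and `Zstage n X t = zstep n t (Zstage n X (t+1))` for `t < n`. -/
def Zstage (n : ℕ) (X : Finset ℕ) (t : ℕ) : Finset ℕ :=
  if _h : n ≤ t then X else zstep n t (Zstage n X (t + 1))
termination_by n - t
decreasing_by omega

/-- The incapable set resulting from puncturing set `X`. -/
def Up (n : ℕ) (X : Finset ℕ) : Finset ℕ := Zstage n X 0

/-!
At stage `t` the zero-LLR set is the puncturing set with the bits `t, …, n-1` flipped:
`Z_t(X) = {x ^^^ (2^n - 2^t) | x ∈ X}`. If a set `Y` is closed under setting bit `t`, the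
AND/OR rule of one decoding stage simply flips bit `t` of every element of `Y`; and
`{x ^^^ m | x ∈ X}` is closed under setting bit `t` whenever bit `t` of `m` is clear, because
`X` is upward closed. At `t = 0` the mask is `2^n - 1`, and XOR with it is the bitwise
complement.
-/

open Finset

namespace Nat

theorem xor_two_pow_of_testBit_eq_false {i t : ℕ} (h : i.testBit t = false) :
    i ^^^ 2 ^ t = i + 2 ^ t := by
  have hq : (i ^^^ 2 ^ t) / 2 ^ t = i / 2 ^ t ^^^ 1 := by
    rw [xor_div_two_pow, Nat.div_self (Nat.two_pow_pos t)]
  have hr : (i ^^^ 2 ^ t) % 2 ^ t = i % 2 ^ t := by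
    rw [xor_mod_two_pow, mod_self, xor_zero]
  have heven : i / 2 ^ t % 2 = 0 := by
    simpa [testBit_eq_decide_div_mod_eq] using h
  have hsucc : i / 2 ^ t ^^^ 1 = i / 2 ^ t + 1 := by
    have hpar : (i / 2 ^ t ^^^ 1) % 2 = (i / 2 ^ t + 1) % 2 := xor_mod_two_eq
    have hhalf : (i / 2 ^ t ^^^ 1) / 2 = i / 2 ^ t / 2 := by
      rw [xor_div_two, Nat.div_eq_of_lt one_lt_two, xor_zero]
    omega
  rw [← div_add_mod (i ^^^ 2 ^ t) (2 ^ t), hq, hr, hsucc, mul_add, mul_one, add_right_comm,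
    div_add_mod]

theorem xor_two_pow_of_testBit_eq_true {i t : ℕ} (h : i.testBit t = true) :
    i ^^^ 2 ^ t = i - 2 ^ t := by
  have hcleared : (i ^^^ 2 ^ t).testBit t = false := by simp [testBit_xor, h]
  have hi : i = (i ^^^ 2 ^ t) + 2 ^ t := by
    rw [← xor_two_pow_of_testBit_eq_false hcleared, xor_cancel_right]
  omega

theorem xor_two_pow_sub_one_of_lt {n x : ℕ} (hx : x < 2 ^ n) :
    x ^^^ (2 ^ n - 1) = 2 ^ n - 1 - x := by
  apply eq_of_testBit_eq
  intro s
  rw [show 2 ^ n - 1 - x = 2 ^ n - (x + 1) by omega, testBit_two_pow_sub_succ hx, testBit_xor,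
    testBit_two_pow_sub_one]
  by_cases hs : s < n
  · simp [hs]
  · have hx' : x < 2 ^ s := lt_of_lt_of_le hx (pow_le_pow_right₀ one_le_two (not_lt.1 hs))
    simp [hs, testBit_lt_two_pow hx']

theorem testBit_two_pow_sub_two_pow_succ_self {n t : ℕ} (h : t < n) :
    (2 ^ n - 2 ^ (t + 1)).testBit t = false := by
  have hlt : 2 ^ (t + 1) - 1 < 2 ^ n :=
    Nat.sub_one_lt_of_le (Nat.two_pow_pos _) (pow_le_pow_right₀ one_le_two h)
  have := testBit_two_pow_sub_succ hlt t
  rw [Nat.sub_add_cancel Nat.one_le_two_pow, testBit_two_pow_sub_one] at this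
  simpa using this

theorem two_pow_sub_two_pow_succ_xor {n t : ℕ} (h : t < n) :
    (2 ^ n - 2 ^ (t + 1)) ^^^ 2 ^ t = 2 ^ n - 2 ^ t := by
  have hle : 2 ^ t * 2 ≤ 2 ^ n := pow_succ 2 t ▸ pow_le_pow_right₀ one_le_two h
  rw [xor_two_pow_of_testBit_eq_false (testBit_two_pow_sub_two_pow_succ_self h), pow_succ]
  omega

end Nat

theorem bdom_xor_two_pow {j t : ℕ} (h : j.testBit t = false) : bdom j (j ^^^ 2 ^ t) := by
  intro s hs
  rw [Nat.testBit_xor, hs, Nat.testBit_two_pow]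
  rcases eq_or_ne t s with rfl | hts
  · simp [h] at hs
  · simp [hts]

theorem mem_image_xor_iff {Y : Finset ℕ} {m i : ℕ} :
    i ∈ Y.image (· ^^^ m) ↔ i ^^^ m ∈ Y := by
  rw [mem_image]
  constructor
  · rintro ⟨a, ha, rfl⟩
    rwa [xor_cancel_right]
  · exact fun h => ⟨_, h, xor_cancel_right i m⟩

theorem image_xor_subset_range {n m : ℕ} {X : Finset ℕ} (hX : X ⊆ range (2 ^ n))
    (hm : m < 2 ^ n) : X.image (· ^^^ m) ⊆ range (2 ^ n) := by
  intro i hi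
  rw [mem_image_xor_iff] at hi
  have := Nat.xor_lt_two_pow (mem_range.1 (hX hi)) hm
  rwa [xor_cancel_right, ← mem_range] at this

theorem zstep_eq_image_xor_two_pow {n t : ℕ} {Y : Finset ℕ} (hY : Y ⊆ range (2 ^ n))
    (hup : ∀ j ∈ Y, j.testBit t = false → j ^^^ 2 ^ t ∈ Y) :
    zstep n t Y = Y.image (· ^^^ 2 ^ t) := by
  ext i
  rw [mem_image_xor_iff]
  simp only [zstep, mem_filter, mem_range]
  cases hb : i.testBit t with
  | false =>
    rw [if_neg (by simp), Nat.xor_two_pow_of_testBit_eq_false hb]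
    refine ⟨fun ⟨_, hi⟩ => hi.elim (fun hi => ?_) id, fun hi => ⟨?_, Or.inr hi⟩⟩
    · simpa [Nat.xor_two_pow_of_testBit_eq_false hb] using hup i hi hb
    · exact lt_of_le_of_lt (Nat.le_add_right i _) (mem_range.1 (hY hi))
  | true =>
    rw [if_pos rfl, ← Nat.xor_two_pow_of_testBit_eq_true hb]
    refine ⟨fun ⟨_, _, hk⟩ => hk, fun hk => ?_⟩
    have hcleared : (i ^^^ 2 ^ t).testBit t = false := by simp [Nat.testBit_xor, hb]
    have hi : i ∈ Y := by simpa using hup _ hk hcleared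
    exact ⟨mem_range.1 (hY hi), hi, hk⟩

theorem image_xor_closed_under_setBit {n t m : ℕ} {X : Finset ℕ} (hX : X ⊆ range (2 ^ n))
    (huc : ∀ j ∈ X, ∀ k, k < 2 ^ n → bdom j k → k ∈ X) (ht : t < n)
    (hm : m.testBit t = false) :
    ∀ j ∈ X.image (· ^^^ m), j.testBit t = false → j ^^^ 2 ^ t ∈ X.image (· ^^^ m) := by
  intro j hj hjt
  rw [mem_image_xor_iff] at hj ⊢
  have hcleared : (j ^^^ m).testBit t = false := by simp [Nat.testBit_xor, hjt, hm]
  rw [Nat.xor_right_comm]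
  have hlt := Nat.xor_lt_two_pow (mem_range.1 (hX hj)) (Nat.pow_lt_pow_right one_lt_two ht)
  exact huc _ hj _ hlt (bdom_xor_two_pow hcleared)

theorem Zstage_self (n : ℕ) (X : Finset ℕ) : Zstage n X n = X := by
  rw [Zstage, dif_pos le_rfl]

theorem Zstage_of_lt {n t : ℕ} (X : Finset ℕ) (h : t < n) :
    Zstage n X t = zstep n t (Zstage n X (t + 1)) := by
  rw [Zstage, dif_neg (not_le.2 h)]

theorem Zstage_eq_image_xor {n : ℕ} {X : Finset ℕ} (hX : X ⊆ range (2 ^ n))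
    (huc : ∀ j ∈ X, ∀ k, k < 2 ^ n → bdom j k → k ∈ X) {t : ℕ} (ht : t ≤ n) :
    Zstage n X t = X.image (· ^^^ (2 ^ n - 2 ^ t)) := by
  induction ht using Nat.decreasingInduction with
  | self => simp [Zstage_self]
  | of_succ t ht ih =>
    have hmask : 2 ^ n - 2 ^ (t + 1) < 2 ^ n := Nat.sub_lt (Nat.two_pow_pos n) (Nat.two_pow_pos _)
    have hclosed := image_xor_closed_under_setBit hX huc ht
      (Nat.testBit_two_pow_sub_two_pow_succ_self ht)
    rw [Zstage_of_lt X ht, ih,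
      zstep_eq_image_xor_two_pow (image_xor_subset_range hX hmask) hclosed, image_image]
    congr 1
    funext x
    rw [Function.comp_apply, Nat.xor_assoc, Nat.two_pow_sub_two_pow_succ_xor ht]

theorem reverse_puncturing_pattern_general (n : ℕ)
    (X : Finset ℕ) (hX : X ⊆ Finset.range (2 ^ n))
    (huc : ∀ j ∈ X, ∀ k, k < 2 ^ n → bdom j k → k ∈ X) :
    Up n X = X.image fun x => 2 ^ n - 1 - x := by
  rw [Up, Zstage_eq_image_xor hX huc (Nat.zero_le n), pow_zero]
  exact image_congr fun x hx => Nat.xor_two_pow_sub_one_of_lt (mem_range.1 (hX hx))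

/-- a puncturing set that is upward closed under binary domination is a
reverse puncturing bit pattern: `U_p(X)` is the bitwise complement of `X`. -/
theorem reverse_puncturing_pattern (n : ℕ) (hn : 1 ≤ n)
    (X : Finset ℕ) (hX : X ⊆ Finset.range (2 ^ n))
    (huc : ∀ j ∈ X, ∀ k, k < 2 ^ n → bdom j k → k ∈ X) :
    Up n X = X.image fun x => 2 ^ n - 1 - x :=
  reverse_puncturing_pattern_general n X hX huc
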